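/- arXiv:2102.00770 — 4 statements merged into one kernel-verified Lean document; each statement's English description precedes it below -/
import Mathlib

section
/- Let e ≥ 2, let μ be a partition of e-weight w, let j be a residue class modulo e, and put k = ε_j(μ) and l = φ_j(μ). Then the partition Ẽ_j^k μ obtained from μ by removing all k of its j-normal nodes has e-weight exactly w − k·l. -/
/-- A partition: a weakly decreasing function `parts : ℕ → ℕ` (0-indexed),
having exactly `len` nonzero parts. -/
structure AbacusPartition where
  parts : ℕ → ℕ
  antitone : Antitone parts
  len : ℕ
  pos_of_lt : ∀ i, i < len → 0 < parts i
  zero_of_ge : ∀ i, len ≤ i → parts i = 0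

/-- The beta-set (abacus display) of a partition with `r` beads:
positions `λ_i + r - i` for `1 ≤ i ≤ r` (0-indexed: `parts i + (r - 1 - i)`). -/
def AbacusPartition.betaSet (lam : AbacusPartition) (r : ℕ) : Finset ℕ :=
  (Finset.range r).image (fun i => lam.parts i + (r - 1 - i))

/-- e-weight of the bead at position `p` of the display `B`: the number of
unoccupied positions `q < p` with `q ≡ p (mod e)`. -/
def beadWeight (e : ℕ) (B : Finset ℕ) (p : ℕ) : ℕ :=
  ((Finset.range p).filter (fun q => q % e = p % e ∧ q ∉ B)).card

/-- Total e-weight of the display `B`. -/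
def abacusWeight (e : ℕ) (B : Finset ℕ) : ℕ :=
  B.sum (fun p => beadWeight e B p)

/-- e-weight of a partition (computed from the display with `lam.len` beads). -/
def eWeight (e : ℕ) (lam : AbacusPartition) : ℕ :=
  abacusWeight e (lam.betaSet lam.len)

/-- Positions on runner `res` (positions `p` with `p % e = res`), in increasing
order, up to a bound strictly beyond every bead. -/
def posList (e : ℕ) (B : Finset ℕ) (res : ℕ) : List ℕ :=
  (List.range (B.sup id + e + 2)).filter (fun p => p % e == res)

/-- One step of the signature-reduction automaton; the state is
`(list of surviving '+' positions, stack of pending '−' positions)`.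
A '−' occurs at `p` when `p` is occupied and its preceding position unoccupied
(position `-1` counts as occupied); a '+' occurs at `p` when `p` is unoccupied
and its preceding position occupied.  A '+' cancels the most recent pending '−'. -/
def signStep (B : Finset ℕ) (st : List ℕ × List ℕ) (p : ℕ) : List ℕ × List ℕ :=
  if p ∈ B ∧ ¬(p = 0 ∨ p - 1 ∈ B) then (st.1, p :: st.2)
  else if p ∉ B ∧ (p = 0 ∨ p - 1 ∈ B) then
    (match st.2 with
     | [] => (p :: st.1, ([] : List ℕ))
     | _ :: tl => (st.1, tl))
  else st

/-- Final state of the reduction of the `j`-signature on runner `res`: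
`(surviving '+' (conormal) positions, surviving '−' (normal) positions)`,
each list in decreasing order of position. -/
def signState (e : ℕ) (B : Finset ℕ) (res : ℕ) : List ℕ × List ℕ :=
  (posList e B res).foldl (signStep B) ([], [])

/-- Positions of the normal beads on runner `res`, in decreasing order. -/
def normalList (e : ℕ) (B : Finset ℕ) (res : ℕ) : List ℕ := (signState e B res).2

/-- The conormal positions on runner `res`, in decreasing order. -/
def conormalList (e : ℕ) (B : Finset ℕ) (res : ℕ) : List ℕ := (signState e B res).1

/-- ε: the number of normal beads on runner `res`. -/
def epsB (e : ℕ) (B : Finset ℕ) (res : ℕ) : ℕ := (normalList e B res).length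

/-- φ: the number of conormal positions on runner `res`. -/
def phiB (e : ℕ) (B : Finset ℕ) (res : ℕ) : ℕ := (conormalList e B res).length

/-- ε_j of a partition: in the display with `lam.len` beads, residue `j`
is carried by runner `(j + lam.len) % e`. -/
def epsP (e : ℕ) (lam : AbacusPartition) (j : ℕ) : ℕ :=
  epsB e (lam.betaSet lam.len) ((j + lam.len) % e)

/-- φ_j of a partition. -/
def phiP (e : ℕ) (lam : AbacusPartition) (j : ℕ) : ℕ :=
  phiB e (lam.betaSet lam.len) ((j + lam.len) % e)

/-- Move each bead in `ps` from its position `p` to `p - 1`. -/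
def moveDown (B : Finset ℕ) (ps : List ℕ) : Finset ℕ :=
  ps.foldl (fun C p => insert (p - 1) (C.erase p)) B

/-- For each position `p` in `ps`, move the bead at `p - 1` to `p`. -/
def moveUp (B : Finset ℕ) (ps : List ℕ) : Finset ℕ :=
  ps.foldl (fun C p => insert p (C.erase (p - 1))) B

/-- Ẽ^t on displays: move the `t` normal beads at the smallest positions down. -/
def Etil (e : ℕ) (B : Finset ℕ) (res t : ℕ) : Finset ℕ :=
  moveDown B ((normalList e B res).reverse.take t)

/-- F̃^t on displays: for the `t` largest conormal positions `p`,
move the bead at `p - 1` to `p`. -/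
def Ftil (e : ℕ) (B : Finset ℕ) (res t : ℕ) : Finset ℕ :=
  moveUp B ((conormalList e B res).take t)

/-- Number of beads of `B` on runner `i`. -/
def runnerCount (e : ℕ) (B : Finset ℕ) (i : ℕ) : ℕ :=
  (B.filter (fun p => p % e = i)).card

/-- Sum of the e-weights of the beads of `B` on runner `i` (this is `|λ(i)|`). -/
def runnerWeight (e : ℕ) (B : Finset ℕ) (i : ℕ) : ℕ :=
  (B.filter (fun p => p % e = i)).sum (beadWeight e B)

/-- The display of the e-core: slide every bead as far up its runner as possible. -/
def coreBeta (e : ℕ) (B : Finset ℕ) : Finset ℕ :=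
  (Finset.range e).biUnion
    (fun i => (Finset.range (runnerCount e B i)).image (fun m => i + m * e))

/-- `lam` lies in the block with bead counts `bd 0, …, bd (e-1)` and e-weight `w`:
displayed with `r = bd 0 + ⋯ + bd (e-1)` beads it has `bd i` beads on runner `i`
and e-weight `w`. -/
def inBlock (e : ℕ) (bd : ℕ → ℕ) (w : ℕ) (lam : AbacusPartition) : Prop :=
  lam.len ≤ (Finset.range e).sum bd ∧
  (∀ i < e, runnerCount e (lam.betaSet ((Finset.range e).sum bd)) i = bd i) ∧
  abacusWeight e (lam.betaSet ((Finset.range e).sum bd)) = w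

/-- The single-runner beta-set of the partition with parts `ρ` and `c` beads. -/
def oneRunnerBeta (rho : List ℕ) (c : ℕ) : Finset ℕ :=
  (Finset.range c).image (fun t => rho.getD t 0 + (c - 1 - t))

/-- The display of the partition `⟨0_{lamOf 0}, …, (e−1)_{lamOf (e−1)} | bd 0, …, bd (e−1)⟩`. -/
def display (e : ℕ) (bd : ℕ → ℕ) (lamOf : ℕ → List ℕ) : Finset ℕ :=
  (Finset.range e).biUnion
    (fun i => (oneRunnerBeta (lamOf i) (bd i)).image (fun m => i + m * e))

/-- The operator Ḟ at runner `res`: apply F̃^{φ} (valid when ε = 0 < φ). -/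
def dotF (e : ℕ) (B : Finset ℕ) (res : ℕ) : Finset ℕ := Ftil e B res (phiB e B res)

/-- Apply a chain of Ḟ steps. -/
def chainFold (e : ℕ) : Finset ℕ → List ℕ → Finset ℕ
  | B, [] => B
  | B, i :: rest => chainFold e (dotF e B i) rest

/-- The chain of Ḟ steps is semisimple: at each step ε = 0 before, φ > 0 before,
and φ = 0 afterwards. -/
def validChain (e : ℕ) : Finset ℕ → List ℕ → Prop
  | _, [] => True
  | B, i :: rest =>
      (epsB e B i = 0 ∧ 0 < phiB e B i ∧ phiB e (dotF e B i) i = 0) ∧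
      validChain e (dotF e B i) rest

/-- `B` induces semisimply to `C` (displays with the same number of beads). -/
def InducesSS (e : ℕ) (B C : Finset ℕ) : Prop :=
  ∃ L : List ℕ, validChain e B L ∧ chainFold e B L = C

/-- Re-display a beta-set with `s` additional beads. -/
def shiftBeta (B : Finset ℕ) (s : ℕ) : Finset ℕ :=
  B.image (· + s) ∪ Finset.range s

/-- `B` induces semisimply to the partition displayed by `C` (where `C` may use a
different number of beads). -/
def InducesToPartition (e : ℕ) (B C : Finset ℕ) : Prop :=
  ∃ D : Finset ℕ, InducesSS e B D ∧ shiftBeta D C.card = shiftBeta C D.card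

/-- The block with bead counts `bd` and weight `w` is Rouquier:
for all `i < j < e`, `bd i − bd j ≥ w` or `bd j − bd i ≥ w − 1`. -/
def IsRouquier (e w : ℕ) (bd : ℕ → ℕ) : Prop :=
  ∀ i j, i < j → j < e → bd j + w ≤ bd i ∨ bd i + (w - 1) ≤ bd j

/-- `lam` is e-singular: it has `e` consecutive equal nonzero parts. -/
def ESingular (e : ℕ) (lam : AbacusPartition) : Prop :=
  ∃ i, lam.parts i ≠ 0 ∧ ∀ m < e, lam.parts (i + m) = lam.parts i

/-- `lam` is e-regular. -/
def ERegular (e : ℕ) (lam : AbacusPartition) : Prop := ¬ ESingular e lam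

/-- The induced e-sequence of the display `B`, as a multiset: each bead of
positive weight `w` at position `p` contributes `p, p−e, …, p−(w−1)e`. -/
def inducedSeq (e : ℕ) (B : Finset ℕ) : Multiset ℕ :=
  B.val.bind (fun p => (Multiset.range (beadWeight e B p)).map (fun m => p - m * e))

/-- The product order: `lam ≤_P mu` iff they have the same e-core and e-weight and
`s(mu)_r ≥ s(lam)_r` componentwise for all sufficiently large `r`. -/
def ProdLE (e : ℕ) (lam mu : AbacusPartition) : Prop :=
  (∃ r, lam.len ≤ r ∧ mu.len ≤ r ∧
    coreBeta e (lam.betaSet r) = coreBeta e (mu.betaSet r)) ∧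
  eWeight e lam = eWeight e mu ∧
  ∃ r0, ∀ r, r0 ≤ r →
    List.Forall₂ (· ≤ ·) ((inducedSeq e (lam.betaSet r)).sort (· ≤ ·))
      ((inducedSeq e (mu.betaSet r)).sort (· ≤ ·))

/-!
Counting, for a bead at `p`, the `p / e` positions below it on its runner gives
`weight B = ∑_{p ∈ B} p / e - ∑_c (a_c choose 2)`, where `a_c` is the number of beads on
runner `c`. Removing the `ε` normal nodes of residue `j` moves `ε` beads from the runner `i`
carrying `j` to vacant positions on runner `i - 1`; this lowers `∑ p / e` by `ε·[i = 0]` and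
turns `a_i, a_{i-1}` into `a_i - ε, a_{i-1} + ε`, so the weight drops by
`ε (ε + a_{i-1} + [i = 0] - a_i)`. Reduction cancels `-` and `+` signs in pairs, so `φ - ε` is
the number of `+` minus the number of `-` in the signature, i.e.
`#{p on runner i : p - 1 occupied} - #{p on runner i : p occupied}`, which is
`a_{i-1} + [i = 0] - a_i` (position `-1` counts as occupied). Hence the drop is `ε φ`.
-/

open Finset

section Arithmetic

theorem Nat.choose_two_add (x y : ℕ) : (x + y).choose 2 = x.choose 2 + y.choose 2 + x * y := by
  simp [Nat.add_choose_eq, Finset.Nat.antidiagonal_succ]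
  ring

theorem sum_card_filter_lt {α : Type*} [LinearOrder α] (S : Finset α) :
    ∑ p ∈ S, #{q ∈ S | q < p} = (#S).choose 2 := by
  induction S using Finset.induction_on_max with
  | empty => simp
  | insert a s ha ih =>
    have has : a ∉ s := fun h => lt_irrefl a (ha a h)
    rw [sum_insert has, card_insert_of_notMem has, Nat.choose_succ_succ', Nat.choose_one_right,
      ← ih, filter_insert, if_neg (lt_irrefl a), filter_true_of_mem ha]
    congr 1
    exact sum_congr rfl fun p hp => by rw [filter_insert, if_neg (not_lt.2 (ha p hp).le)]

theorem sum_add_eq_sum_add_of_eqOn_compl_pair {ι M : Type*} [DecidableEq ι] [AddCommMonoid M]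
    {s : Finset ι} {i i' : ι} (hi : i ∈ s) (hi' : i' ∈ s) (hne : i ≠ i') {F G : ι → M}
    (h : ∀ c ∈ s, c ≠ i → c ≠ i' → F c = G c) :
    ∑ c ∈ s, F c + G i + G i' = ∑ c ∈ s, G c + F i + F i' := by
  have hi'' : i' ∈ s.erase i := mem_erase.2 ⟨hne.symm, hi'⟩
  rw [← add_sum_erase s F hi, ← add_sum_erase s G hi, ← add_sum_erase _ F hi'',
    ← add_sum_erase _ G hi'', sum_congr rfl fun c hc =>
      h c (mem_of_mem_erase (mem_of_mem_erase hc)) (ne_of_mem_erase (mem_of_mem_erase hc))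
        (ne_of_mem_erase hc)]
  abel

variable {e : ℕ}

theorem Nat.card_filter_range_mod_eq (he : 0 < e) (p : ℕ) :
    #{q ∈ range p | q % e = p % e} = p / e := by
  have := Nat.count_modEq_card (b := p) he p
  rwa [Nat.count_eq_card_filter_range, if_neg (lt_irrefl _), add_zero] at this

theorem Nat.sub_one_div_add_ite {q : ℕ} (hq : q ≠ 0) :
    (q - 1) / e + (if q % e = 0 then 1 else 0) = q / e := by
  obtain ⟨r, rfl⟩ := Nat.exists_eq_add_one_of_ne_zero hq
  simp [Nat.succ_div, Nat.dvd_iff_mod_eq_zero]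

theorem Nat.succ_mod_eq_iff {i q : ℕ} (hi : i < e) :
    (q + 1) % e = i ↔ q % e = (i + e - 1) % e := by
  have : (q + 1) % e = i ↔ q + 1 ≡ i + e [MOD e] := by
    rw [Nat.ModEq, Nat.add_mod_right, Nat.mod_eq_of_lt hi]
  rw [this, show i + e = (i + e - 1) + 1 by omega]
  exact ⟨Nat.ModEq.add_right_cancel' 1, Nat.ModEq.add_right 1⟩

theorem Nat.add_sub_one_mod_ne (he : 2 ≤ e) {i : ℕ} (hi : i < e) : (i + e - 1) % e ≠ i := by
  rcases i with _ | i
  · rw [Nat.mod_eq_of_lt (by omega)]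
    omega
  · rw [show i + 1 + e - 1 = i + e by omega, Nat.add_mod_right, Nat.mod_eq_of_lt (by omega)]
    omega

theorem Nat.sub_one_mod_eq {i p : ℕ} (hi : i < e) (hp : p ≠ 0) (hpi : p % e = i) :
    (p - 1) % e = (i + e - 1) % e := by
  rwa [← Nat.succ_mod_eq_iff hi, Nat.sub_add_cancel (Nat.one_le_iff_ne_zero.2 hp)]

theorem Nat.ne_zero_of_mem_of_sub_one_notMem {B : Finset ℕ} {p : ℕ} (hp : p ∈ B)
    (hp1 : p - 1 ∉ B) : p ≠ 0 := by
  rintro rfl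
  exact hp1 hp

end Arithmetic

section Weight

variable {e : ℕ}

theorem beadWeight_add_card_lt (he : 0 < e) (B : Finset ℕ) (p : ℕ) :
    beadWeight e B p + #{q ∈ B | q % e = p % e ∧ q < p} = p / e := by
  have hocc : #{q ∈ B | q % e = p % e ∧ q < p}
      = #{q ∈ {q ∈ range p | q % e = p % e} | q ∈ B} := by
    congr 1
    ext q
    simp only [mem_filter, mem_range]
    tauto
  rw [hocc, beadWeight, ← filter_filter, add_comm, card_filter_add_card_filter_not,
    Nat.card_filter_range_mod_eq he]

theorem abacusWeight_add_sum_choose (he : 0 < e) (B : Finset ℕ) :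
    abacusWeight e B + ∑ c ∈ range e, (runnerCount e B c).choose 2 = ∑ p ∈ B, p / e := by
  have hrunner : ∀ c ∈ range e, (runnerCount e B c).choose 2
      = ∑ p ∈ B with p % e = c, #{q ∈ B | q % e = p % e ∧ q < p} := by
    intro c _
    rw [runnerCount, ← sum_card_filter_lt]
    refine sum_congr rfl fun p hp => ?_
    rw [(mem_filter.1 hp).2, filter_filter]
  rw [sum_congr rfl hrunner, sum_fiberwise_of_maps_to fun p _ => mem_range.2 (Nat.mod_lt p he),
    abacusWeight, ← sum_add_distrib]
  exact sum_congr rfl fun p _ => beadWeight_add_card_lt he B p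

end Weight

section MovingBeads

theorem moveDown_eq (L : List ℕ) (B : Finset ℕ) (hL : L.Nodup)
    (h : ∀ p ∈ L, p ∈ B ∧ p - 1 ∉ B ∧ p - 1 ∉ L) :
    moveDown B L = B \ L.toFinset ∪ L.toFinset.image (· - 1) := by
  induction L generalizing B with
  | nil => simp [moveDown]
  | cons p L ih =>
    obtain ⟨hpL, hL⟩ := List.nodup_cons.1 hL
    obtain ⟨hpB, hp1B, hp1L⟩ := h p List.mem_cons_self
    have hp0 := Nat.ne_zero_of_mem_of_sub_one_notMem hpB hp1B
    change moveDown (insert (p - 1) (B.erase p)) L = _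
    rw [ih _ hL]
    · ext x
      simp only [mem_union, mem_sdiff, mem_insert, mem_erase, mem_image, List.toFinset_cons,
        List.mem_toFinset, List.mem_cons] at hp1L ⊢
      grind
    · intro q hq
      obtain ⟨hqB, hq1B, hq1L⟩ := h q (List.mem_cons_of_mem p hq)
      have hq0 := Nat.ne_zero_of_mem_of_sub_one_notMem hqB hq1B
      have hqp : q ≠ p := by rintro rfl; exact hpL hq
      refine ⟨mem_insert_of_mem (mem_erase.2 ⟨hqp, hqB⟩), ?_,
        fun h' => hq1L (List.mem_cons_of_mem p h')⟩
      simp only [mem_insert, mem_erase, not_or, not_and]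
      exact ⟨by omega, fun _ => hq1B⟩

variable {e : ℕ}

theorem runnerCount_sdiff_union_add {B S S' : Finset ℕ} (hSB : S ⊆ B) (hS'B : Disjoint B S')
    (c : ℕ) : runnerCount e (B \ S ∪ S') c + runnerCount e S c
      = runnerCount e B c + runnerCount e S' c := by
  have hsdiff : {p ∈ B \ S | p % e = c} = {p ∈ B | p % e = c} \ {p ∈ S | p % e = c} := by
    ext p
    simp only [mem_filter, mem_sdiff]
    tauto
  rw [runnerCount, filter_union, card_union_of_disjoint
      (disjoint_filter_filter (hS'B.mono_left sdiff_subset)), hsdiff, add_right_comm, runnerCount,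
    card_sdiff_add_card_eq_card (filter_subset_filter _ hSB), runnerCount, runnerCount]

theorem runnerCount_of_forall_mod_eq {S : Finset ℕ} {i : ℕ} (hS : ∀ s ∈ S, s % e = i)
    (c : ℕ) : runnerCount e S c = if c = i then #S else 0 := by
  split_ifs with hc
  · rw [runnerCount, filter_true_of_mem (hc ▸ hS)]
  · rw [runnerCount, filter_false_of_mem fun s hs (h : s % e = c) => hc (h ▸ hS s hs),
      card_empty]

theorem injOn_sub_one_of_sub_one_notMem {B S : Finset ℕ} (hSB : S ⊆ B)
    (hS : ∀ s ∈ S, s - 1 ∉ B) : Set.InjOn (· - 1) (S : Set ℕ) := by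
  intro x hx y hy hxy
  have hx0 := Nat.ne_zero_of_mem_of_sub_one_notMem (hSB hx) (hS x hx)
  have hy0 := Nat.ne_zero_of_mem_of_sub_one_notMem (hSB hy) (hS y hy)
  simp only at hxy
  omega

theorem sum_div_sdiff_union_image_sub_one_add {B S : Finset ℕ} {i : ℕ} (hSB : S ⊆ B)
    (hS : ∀ s ∈ S, s % e = i ∧ s - 1 ∉ B) :
    ∑ p ∈ B \ S ∪ S.image (· - 1), p / e + #S * (if i = 0 then 1 else 0)
      = ∑ p ∈ B, p / e := by
  have hdisj : Disjoint (B \ S) (S.image (· - 1)) := by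
    refine disjoint_left.2 fun p hp hp' => ?_
    obtain ⟨s, hs, rfl⟩ := mem_image.1 hp'
    exact (hS s hs).2 (mem_sdiff.1 hp).1
  rw [sum_union hdisj, sum_image (injOn_sub_one_of_sub_one_notMem hSB fun s hs => (hS s hs).2),
    ← sum_sdiff hSB, add_assoc, ← smul_eq_mul, ← sum_const, ← sum_add_distrib]
  refine congrArg _ (sum_congr rfl fun s hs => ?_)
  rw [← (hS s hs).1,
    Nat.sub_one_div_add_ite (Nat.ne_zero_of_mem_of_sub_one_notMem (hSB hs) (hS s hs).2)]

theorem abacusWeight_sdiff_union_image_sub_one (he : 2 ≤ e) {i : ℕ} (hi : i < e)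
    {B S : Finset ℕ} (hSB : S ⊆ B) (hS : ∀ s ∈ S, s % e = i ∧ s - 1 ∉ B) :
    abacusWeight e (B \ S ∪ S.image (· - 1))
        + #S * (#S + runnerCount e B ((i + e - 1) % e) + (if i = 0 then 1 else 0))
      = abacusWeight e B + #S * runnerCount e B i := by
  set i' := (i + e - 1) % e
  set S' := S.image (· - 1)
  have hinj := injOn_sub_one_of_sub_one_notMem hSB fun s hs => (hS s hs).2
  have hS'card : #S' = #S := card_image_of_injOn hinj
  have hS'B : Disjoint B S' := by
    refine disjoint_right.2 fun p hp => ?_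
    obtain ⟨s, hs, rfl⟩ := mem_image.1 hp
    exact (hS s hs).2
  have hS'runner : ∀ p ∈ S', p % e = i' := by
    intro p hp
    obtain ⟨s, hs, rfl⟩ := mem_image.1 hp
    exact Nat.sub_one_mod_eq hi (Nat.ne_zero_of_mem_of_sub_one_notMem (hSB hs) (hS s hs).2)
      (hS s hs).1
  have hii' : i ≠ i' := (Nat.add_sub_one_mod_ne he hi).symm
  have hcount := runnerCount_sdiff_union_add (e := e) hSB hS'B
  simp only [runnerCount_of_forall_mod_eq (fun s hs => (hS s hs).1),
    runnerCount_of_forall_mod_eq hS'runner, hS'card] at hcount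
  have hfi : runnerCount e (B \ S ∪ S') i + #S = runnerCount e B i := by
    simpa [hii'] using hcount i
  have hfi' : runnerCount e (B \ S ∪ S') i' = runnerCount e B i' + #S := by
    simpa [hii'.symm] using hcount i'
  have hpair := sum_add_eq_sum_add_of_eqOn_compl_pair (i' := i') (mem_range.2 hi)
    (mem_range.2 (Nat.mod_lt _ (by omega))) hii'
    (F := fun c => (runnerCount e (B \ S ∪ S') c).choose 2)
    (G := fun c => (runnerCount e B c).choose 2)
    fun c _ hci hci' => by simpa [hci, hci'] using congrArg (Nat.choose · 2) (hcount c)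
  have hW := abacusWeight_add_sum_choose (by omega : 0 < e) B
  have hW' := abacusWeight_add_sum_choose (by omega : 0 < e) (B \ S ∪ S')
  have hR := sum_div_sdiff_union_image_sub_one_add (e := e) hSB hS
  simp only [← hfi, hfi', Nat.choose_two_add] at hpair ⊢
  linarith

end MovingBeads

section Signature

variable (B : Finset ℕ)

theorem signStep_length (st : List ℕ × List ℕ) (p : ℕ) :
    (signStep B st p).1.length + st.2.length + (if p ∈ B then 1 else 0)
      = st.1.length + (signStep B st p).2.length + (if p = 0 ∨ p - 1 ∈ B then 1 else 0) := by
  unfold signStep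
  split_ifs <;> (try split) <;> simp_all <;> omega

theorem foldl_signStep_length (l : List ℕ) (st : List ℕ × List ℕ) :
    (l.foldl (signStep B) st).1.length + st.2.length + l.countP (· ∈ B)
      = st.1.length + (l.foldl (signStep B) st).2.length
        + l.countP (fun p => p = 0 ∨ p - 1 ∈ B) := by
  induction l generalizing st with
  | nil => simp
  | cons p l ih =>
    have hstep := signStep_length B st p
    have hrest := ih (signStep B st p)
    simp only [List.foldl_cons, List.countP_cons, decide_eq_true_eq] at hstep hrest ⊢
    omega

theorem foldl_signStep_snd_sublist (l : List ℕ) (st : List ℕ × List ℕ) :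
    List.Sublist (l.foldl (signStep B) st).2
      ((l.filter fun p => p ∈ B ∧ ¬(p = 0 ∨ p - 1 ∈ B)).reverse ++ st.2) := by
  induction l generalizing st with
  | nil => simp
  | cons p l ih =>
    refine (ih _).trans ?_
    obtain ⟨s1, s2⟩ := st
    unfold signStep
    split_ifs with h1 h2
    · rw [List.filter_cons_of_pos (by simpa using h1)]
      simp
    · rw [List.filter_cons_of_neg (by simpa using h1)]
      cases s2 <;> simp
    · rw [List.filter_cons_of_neg (by simpa using h1)]

variable {e : ℕ} {i : ℕ}

theorem mem_posList {p : ℕ} : p ∈ posList e B i ↔ p < B.sup id + e + 2 ∧ p % e = i := by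
  simp [posList]

theorem succ_lt_of_mem {p : ℕ} (hp : p ∈ B) : p + 1 < B.sup id + e + 2 := by
  have : p ≤ B.sup id := le_sup (f := id) hp
  omega

theorem countP_posList (f : ℕ → Prop) [DecidablePred f] :
    (posList e B i).countP (f ·) = #{p ∈ range (B.sup id + e + 2) | p % e = i ∧ f p} := by
  have hnd : (posList e B i).Nodup := List.nodup_range.filter _
  rw [List.countP_eq_length_filter, ← List.toFinset_card_of_nodup (hnd.filter _),
    List.toFinset_filter]
  congr 1
  ext p
  simp [mem_posList, and_assoc]

theorem countP_posList_mem : (posList e B i).countP (· ∈ B) = runnerCount e B i := by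
  rw [countP_posList, runnerCount]
  congr 1
  ext p
  simp only [mem_filter, mem_range]
  have hlt := fun h => succ_lt_of_mem (e := e) B (p := p) h
  constructor
  · exact fun ⟨_, h1, h2⟩ => ⟨h2, h1⟩
  · exact fun ⟨h1, h2⟩ => ⟨by have := hlt h1; omega, h2, h1⟩

theorem countP_posList_prev_mem (hi : i < e) :
    (posList e B i).countP (fun p => p = 0 ∨ p - 1 ∈ B)
      = (if i = 0 then 1 else 0) + runnerCount e B ((i + e - 1) % e) := by
  have hsplit : {p ∈ range (B.sup id + e + 2) | p % e = i ∧ (p = 0 ∨ p - 1 ∈ B)}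
      = (if i = 0 then {0} else ∅) ∪ {q ∈ B | q % e = (i + e - 1) % e}.image (· + 1) := by
    ext p
    rcases p with _ | q
    · split_ifs with h <;> simp [h, eq_comm]
    · have hlt := fun h => succ_lt_of_mem (e := e) B (p := q) h
      simp only [mem_filter, mem_range, mem_union, mem_image, Nat.add_right_cancel_iff,
        exists_eq_right, Nat.succ_sub_one, Nat.add_one_ne_zero, false_or, Nat.succ_mod_eq_iff hi]
      split_ifs <;> simp only [mem_singleton, notMem_empty, Nat.add_one_ne_zero, false_or] <;>
        exact ⟨fun ⟨_, h1, h2⟩ => ⟨h2, h1⟩, fun ⟨h1, h2⟩ => ⟨hlt h1, h2, h1⟩⟩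
  rw [countP_posList, hsplit, card_union_of_disjoint,
    card_image_of_injective _ (add_left_injective 1), runnerCount]
  · split_ifs <;> rfl
  · split_ifs <;> simp

theorem phiB_add_runnerCount (hi : i < e) :
    phiB e B i + runnerCount e B i
      = epsB e B i + runnerCount e B ((i + e - 1) % e) + (if i = 0 then 1 else 0) := by
  have := foldl_signStep_length B (posList e B i) ([], [])
  rw [countP_posList_mem, countP_posList_prev_mem B hi] at this
  simp only [List.length_nil, add_zero, zero_add] at this
  unfold phiB epsB conormalList normalList signState
  omega

theorem normalList_sublist :
    List.Sublist (normalList e B i)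
      ((posList e B i).filter fun p => p ∈ B ∧ ¬(p = 0 ∨ p - 1 ∈ B)).reverse := by
  simpa [normalList, signState] using foldl_signStep_snd_sublist B (posList e B i) ([], [])

theorem nodup_normalList : (normalList e B i).Nodup :=
  (normalList_sublist B).nodup (List.nodup_reverse.2 ((List.nodup_range.filter _).filter _))

theorem mem_normalList {p : ℕ} (hp : p ∈ normalList e B i) :
    p % e = i ∧ p ∈ B ∧ p - 1 ∉ B := by
  have := (normalList_sublist B).subset hp
  simp only [List.mem_reverse, List.mem_filter, mem_posList, decide_eq_true_eq, not_or] at this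
  exact ⟨this.1.2, this.2.1, this.2.2.2⟩

end Signature

theorem Etil_epsB_eq {e : ℕ} (he : 2 ≤ e) (B : Finset ℕ) {i : ℕ} (hi : i < e) :
    Etil e B i (epsB e B i)
      = B \ (normalList e B i).toFinset ∪ (normalList e B i).toFinset.image (· - 1) := by
  rw [Etil, epsB, ← List.length_reverse, List.take_length, ← List.toFinset_reverse]
  refine moveDown_eq _ B (List.nodup_reverse.2 (nodup_normalList B)) fun p hp => ?_
  obtain ⟨hpi, hpB, hp1B⟩ := mem_normalList B (List.mem_reverse.1 hp)
  refine ⟨hpB, hp1B, fun hp1 => Nat.add_sub_one_mod_ne he hi ?_⟩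
  rw [← Nat.sub_one_mod_eq hi (Nat.ne_zero_of_mem_of_sub_one_notMem hpB hp1B) hpi]
  exact (mem_normalList B (List.mem_reverse.1 hp1)).1

theorem abacusWeight_Etil_epsB_add {e : ℕ} (he : 2 ≤ e) (B : Finset ℕ) {i : ℕ}
    (hi : i < e) :
    abacusWeight e (Etil e B i (epsB e B i)) + epsB e B i * phiB e B i = abacusWeight e B := by
  have hcard : #(normalList e B i).toFinset = epsB e B i :=
    List.toFinset_card_of_nodup (nodup_normalList B)
  have hmove := abacusWeight_sdiff_union_image_sub_one he hi
    (fun p hp => (mem_normalList B (List.mem_toFinset.1 hp)).2.1)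
    (fun p hp => (mem_normalList B (List.mem_toFinset.1 hp)).imp_right And.right)
  have hcount := congrArg (epsB e B i * ·) (phiB_add_runnerCount B hi)
  rw [hcard] at hmove
  rw [Etil_epsB_eq he B hi]
  simp only [mul_add] at hcount hmove ⊢
  linarith

theorem stmt0_general (e : ℕ) (he : 2 ≤ e) (w : ℕ) (mu : AbacusPartition)
    (hw : eWeight e mu = w) (j : ℕ) (k l : ℕ)
    (hk : k = epsP e mu j) (hl : l = phiP e mu j) :
    abacusWeight e (Etil e (mu.betaSet mu.len) ((j + mu.len) % e) k) + k * l = w := by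
  subst hw hk hl
  exact abacusWeight_Etil_epsB_add he _ (Nat.mod_lt _ (by omega))

/-- removing all `k = ε_j(μ)` j-normal nodes from a partition of
e-weight `w` yields a partition of e-weight `w − k·l`, where `l = φ_j(μ)`. -/
theorem stmt0 (e : ℕ) (he : 2 ≤ e) (w : ℕ) (mu : AbacusPartition)
    (hw : eWeight e mu = w) (j : ℕ) (hj : j < e) (k l : ℕ)
    (hk : k = epsP e mu j) (hl : l = phiP e mu j) :
    abacusWeight e (Etil e (mu.betaSet mu.len) ((j + mu.len) % e) k) + k * l = w :=
  stmt0_general e he w mu hw j k l hk hl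
end

section
/- Let e ≥ 2, let w ∈ {3,4}, let μ be a partition of e-weight w, let j be a residue class modulo e, and let k be an integer with 0 < k < w. If φ_j(μ) − ε_j(μ) = k then ε_j(μ) ≤ 1 (so φ_j(μ) is either k or k+1); likewise, if ε_j(μ) − φ_j(μ) = k then φ_j(μ) ≤ 1 (so ε_j(μ) is either k or k+1). -/
/-- Invariant of the reduction automaton after it has read the positions `< n` of runner `res`. -/
def SignInv (e : ℕ) (B : Finset ℕ) (res n : ℕ) (st : List ℕ × List ℕ) : Prop :=
  (∀ q ∈ st.1, q ∉ B ∧ q % e = res) ∧ (∀ p ∈ st.2, p ∈ B ∧ p % e = res) ∧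
  (st.2 ++ st.1).Pairwise (· > ·) ∧ ∀ x ∈ st.2 ++ st.1, x < n

section SignInv

variable {e : ℕ} {B : Finset ℕ} {res : ℕ}

lemma SignInv.mono {n m : ℕ} {st : List ℕ × List ℕ} (h : SignInv e B res n st) (hnm : n ≤ m) :
    SignInv e B res m st :=
  ⟨h.1, h.2.1, h.2.2.1, fun x hx => (h.2.2.2 x hx).trans_le hnm⟩

lemma SignInv.step {n p : ℕ} {st : List ℕ × List ℕ} (h : SignInv e B res n st)
    (hnp : n ≤ p) (hp : p % e = res) : SignInv e B res (p + 1) (signStep B st p) := by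
  obtain ⟨hgap, hbead, hsorted, hlt⟩ := h
  have hcons : ((p :: st.2) ++ st.1).Pairwise (· > ·) := by
    rw [List.cons_append, List.pairwise_cons]
    exact ⟨fun x hx => (hlt x hx).trans_le hnp, hsorted⟩
  unfold signStep
  split_ifs with hminus hplus
  · refine ⟨hgap, ?_, hcons, ?_⟩
    · simpa [hminus.1, hp] using hbead
    · simp only [List.cons_append, List.mem_cons]
      rintro x (rfl | hx)
      exacts [Nat.lt_succ_self _, (hlt x hx).trans_le (by omega)]
  · rcases hst : st.2 with _ | ⟨a, tl⟩
    · rw [hst] at hcons hlt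
      refine ⟨?_, by simp, by simpa using hcons, ?_⟩
      · simpa [hplus.1, hp] using hgap
      · simp only [List.nil_append, List.mem_cons]
        rintro x (rfl | hx)
        exacts [Nat.lt_succ_self _, (hlt x hx).trans_le (by omega)]
    · rw [hst] at hbead hsorted hlt
      refine ⟨hgap, fun x hx => hbead x (List.mem_cons_of_mem a hx),
        (List.pairwise_cons.mp hsorted).2, fun x hx => ?_⟩
      exact (hlt x (List.mem_cons_of_mem a hx)).trans_le (by omega)
  · exact SignInv.mono ⟨hgap, hbead, hsorted, hlt⟩ (by omega)

lemma SignInv.foldl_signStep_of_sorted (l : List ℕ) (hl : l.Pairwise (· < ·))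
    (hres : ∀ x ∈ l, x % e = res) {n : ℕ} (hn : ∀ x ∈ l, n ≤ x) {st : List ℕ × List ℕ}
    (h : SignInv e B res n st) : ∃ m, SignInv e B res m (l.foldl (signStep B) st) := by
  induction l generalizing n st with
  | nil => exact ⟨n, h⟩
  | cons p rest ih =>
    rw [List.pairwise_cons] at hl
    exact ih hl.2 (fun x hx => hres x (List.mem_cons_of_mem p hx)) hl.1
      (h.step (hn p List.mem_cons_self) (hres p List.mem_cons_self))

end SignInv

lemma signInv_signState (e : ℕ) (B : Finset ℕ) (res : ℕ) :
    ∃ m, SignInv e B res m (signState e B res) :=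
  SignInv.foldl_signStep_of_sorted _ (List.pairwise_lt_range.filter _)
    (fun x hx => by simpa using (List.mem_filter.mp hx).2) (fun x _ => Nat.zero_le x)
    (n := 0) ⟨by simp, by simp, by simp, by simp⟩

lemma phiB_le_beadWeight {e : ℕ} {B : Finset ℕ} {res p : ℕ} (hp : p ∈ normalList e B res) :
    phiB e B res ≤ beadWeight e B p := by
  obtain ⟨_, hgap, hbead, hsorted, -⟩ := signInv_signState e B res
  rw [List.pairwise_append] at hsorted
  have hsub : (conormalList e B res).toFinset ⊆
      (Finset.range p).filter (fun q => q % e = p % e ∧ q ∉ B) := by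
    intro q hq
    rw [List.mem_toFinset] at hq
    simp only [Finset.mem_filter, Finset.mem_range]
    exact ⟨hsorted.2.2 p hp q hq, by rw [(hgap q hq).2, (hbead p hp).2], (hgap q hq).1⟩
  calc phiB e B res = (conormalList e B res).toFinset.card :=
        (List.toFinset_card_of_nodup hsorted.2.1.nodup).symm
    _ ≤ beadWeight e B p := Finset.card_le_card hsub

lemma epsB_mul_phiB_le_abacusWeight (e : ℕ) (B : Finset ℕ) (res : ℕ) :
    epsB e B res * phiB e B res ≤ abacusWeight e B := by
  obtain ⟨_, -, hbead, hsorted, -⟩ := signInv_signState e B res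
  have hnodup : (normalList e B res).Nodup := (List.pairwise_append.mp hsorted).1.nodup
  calc epsB e B res * phiB e B res
      = ∑ _ ∈ (normalList e B res).toFinset, phiB e B res := by
        rw [Finset.sum_const, smul_eq_mul, List.toFinset_card_of_nodup hnodup]; rfl
    _ ≤ ∑ p ∈ (normalList e B res).toFinset, beadWeight e B p :=
        Finset.sum_le_sum fun p hp => phiB_le_beadWeight (List.mem_toFinset.mp hp)
    _ ≤ abacusWeight e B :=
        Finset.sum_le_sum_of_subset fun p hp => (hbead p (List.mem_toFinset.mp hp)).1

lemma le_one_of_mul_add_le_four {a b k : ℕ} (hk : 0 < k) (hb : b = a + k) (h : a * b ≤ 4) :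
    a ≤ 1 := by
  subst hb
  by_contra! ha
  nlinarith

theorem stmt3_general (e : ℕ) (w : ℕ) (hw34 : w = 3 ∨ w = 4)
    (mu : AbacusPartition) (hw : eWeight e mu = w) (j : ℕ)
    (k : ℕ) (hk0 : 0 < k) :
    (phiP e mu j = epsP e mu j + k → epsP e mu j ≤ 1) ∧
    (epsP e mu j = phiP e mu j + k → phiP e mu j ≤ 1) := by
  have hmul : epsP e mu j * phiP e mu j ≤ 4 :=
    (epsB_mul_phiB_le_abacusWeight e _ _).trans (hw.le.trans (by omega))
  exact ⟨fun h => le_one_of_mul_add_le_four hk0 h hmul,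
    fun h => le_one_of_mul_add_le_four hk0 h ((mul_comm _ _).trans_le hmul)⟩

/-- for a partition of e-weight `w ∈ {3,4}` and `0 < k < w`:
if `φ_j(μ) − ε_j(μ) = k` then `ε_j(μ) ≤ 1`, and if `ε_j(μ) − φ_j(μ) = k` then
`φ_j(μ) ≤ 1`. -/
theorem stmt3 (e : ℕ) (he : 2 ≤ e) (w : ℕ) (hw34 : w = 3 ∨ w = 4)
    (mu : AbacusPartition) (hw : eWeight e mu = w) (j : ℕ) (hj : j < e)
    (k : ℕ) (hk0 : 0 < k) (hkw : k < w) :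
    (phiP e mu j = epsP e mu j + k → epsP e mu j ≤ 1) ∧
    (epsP e mu j = phiP e mu j + k → phiP e mu j ≤ 1) :=
  stmt3_general e w hw34 mu hw j k hk0
end

section
/- Let e ≥ 2 and let λ be a nonempty partition, displayed on an abacus with e runners and r beads where r is at least the number of parts of λ. If every bead lying on the runner that contains the smallest unoccupied position of the display has e-weight 0, then λ is e-regular. Equivalently, if λ is e-singular then the runner containing the smallest unoccupied position carries a bead of positive e-weight. -/
/-- if, in an abacus display of a nonempty partition `lam` with
`r ≥ l(lam)` beads, every bead on the runner containing the smallest unoccupied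
position has e-weight 0, then `lam` is e-regular. -/
theorem stmt4 (e : ℕ) (he : 2 ≤ e) (lam : AbacusPartition) (hne : 0 < lam.len)
    (r : ℕ) (hr : lam.len ≤ r) (p : ℕ)
    (hp : p ∉ lam.betaSet r) (hmin : ∀ q < p, q ∈ lam.betaSet r)
    (hzero : ∀ q ∈ lam.betaSet r, q % e = p % e → beadWeight e (lam.betaSet r) q = 0) :
    ERegular e lam := by
  rintro ⟨i, hi0, hrun⟩
  have he0 : 0 < e := by omega
  set B := lam.betaSet r with hB
  have hmemB : ∀ q, q ∈ B ↔ ∃ j, j < r ∧ lam.parts j + (r - 1 - j) = q := by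
    intro q
    simp only [hB, AbacusPartition.betaSet, Finset.mem_image, Finset.mem_range]
  set v := lam.parts i with hv
  have hvpos : 0 < v := Nat.pos_of_ne_zero hi0
  -- find maximal run end k
  have hex : ∃ n, lam.parts (i + (e - 1) + n + 1) ≠ v := by
    refine ⟨lam.len, ?_⟩
    rw [lam.zero_of_ge _ (by omega)]
    omega
  set n0 := Nat.find hex with hn0
  set k := i + (e - 1) + n0 with hk
  have hk1 : lam.parts (k + 1) ≠ v := Nat.find_spec hex
  have hkv : lam.parts k = v := by
    rcases Nat.eq_zero_or_pos n0 with h | h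
    · have := hrun (e - 1) (by omega)
      rw [hk, h]; simpa using this
    · have := Nat.find_min hex (show n0 - 1 < n0 by omega)
      push_neg at this
      have heq : i + (e - 1) + (n0 - 1) + 1 = k := by omega
      rwa [heq] at this
  have hkr : k < r := by
    by_contra h
    have : lam.parts k = 0 := lam.zero_of_ge k (by omega)
    omega
  set a := v + (r - 1 - k) with ha
  -- positions a .. a+e-1 are occupied
  have hint : ∀ t, t < e → a + t ∈ B := by
    intro t ht
    have hik : i ≤ k - t := by omega
    have hjk : k - t ≤ k := by omega
    have hjv : lam.parts (k - t) = v := by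
      have h1 : lam.parts (k - t) ≤ v := lam.antitone hik
      have h2 : v ≤ lam.parts (k - t) := by rw [← hkv]; exact lam.antitone hjk
      omega
    rw [hmemB]
    exact ⟨k - t, by omega, by rw [hjv]; omega⟩
  -- a - 1 is unoccupied
  have ha1 : a - 1 ∉ B := by
    rw [hmemB]
    rintro ⟨j, hjr, hje⟩
    rcases le_or_gt j k with hjk | hjk
    · have : v ≤ lam.parts j := by rw [← hkv]; exact lam.antitone hjk
      omega
    · have h1 : lam.parts j ≤ lam.parts (k + 1) := lam.antitone (by omega)
      have h2 : lam.parts (k + 1) ≤ v := by rw [← hkv]; exact lam.antitone (by omega)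
      have h3 : lam.parts (k + 1) < v := by omega
      omega
  -- p < a
  have hpa : p < a := by
    by_contra h
    push_neg at h
    rcases le_or_gt p (a + (e - 1)) with h2 | h2
    · exact hp (by have := hint (p - a) (by omega); simpa [show a + (p - a) = p by omega] using this)
    · exact ha1 (hmin (a - 1) (by omega))
  -- the bead on runner p % e in the interval
  set t := (p % e + e - a % e) % e with htdef
  have hte : t < e := Nat.mod_lt _ he0
  set q := a + t with hq
  have hqB : q ∈ B := hint t hte
  have hqmod : q % e = p % e := by
    have hda : e * (a / e) + a % e = a := Nat.div_add_mod a e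
    have hae : a % e < e := Nat.mod_lt _ he0
    have hpe : p % e < e := Nat.mod_lt _ he0
    have h1 : q = e * (a / e) + (a % e + t) := by omega
    rw [h1, Nat.mul_add_mod]
    have h2 : (a % e + t) % e = (a % e + (p % e + e - a % e)) % e := by
      conv_rhs => rw [Nat.add_mod]
      rw [htdef]
      rw [Nat.add_mod (a % e) ((p % e + e - a % e) % e)]
      simp [Nat.mod_mod_of_dvd]
    rw [h2, show a % e + (p % e + e - a % e) = p % e + e by omega,
      Nat.add_mod_right, Nat.mod_mod_of_dvd _ dvd_rfl]
  have hw := hzero q hqB hqmod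
  have : p ∈ (Finset.range q).filter (fun x => x % e = q % e ∧ x ∉ B) := by
    rw [Finset.mem_filter, Finset.mem_range]
    exact ⟨by omega, by rw [hqmod], hp⟩
  have hpos : 0 < beadWeight e B q := Finset.card_pos.mpr ⟨p, this⟩
  omega
end

section
/- Let e ≥ 2 and 0 < a < b ≤ e, and let B be the block of e-weight 3 with notation ⟨3^a, 4^{b−a}, 3^{e−b}⟩ (i.e., b_i = 3 for 0 ≤ i < a, b_i = 4 for a ≤ i < b, and b_i = 3 for b ≤ i < e), which forms a [3:1]-pair via the residue j carried by runner a. The partitions lying in B that are exceptional for this pair are exactly: ⟨a_{(2,1)}⟩; ⟨a_{(1,1)}, i_{(1)}⟩ for a < i < e; ⟨i_{(1)}, a_{(1,1)}⟩ for 0 ≤ i ≤ a − 2; and ⟨a_{(1,1,1)}⟩. -/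
/-!
Only runners `a - 1` and `a` matter for the residue carried by runner `a`: with `S`, `T` the
sets of rows occupied on runners `a` and `a - 1`, the signature read along runner `a` has a `-`
in row `m` when `m ∈ S \ T` and a `+` when `m ∈ T \ S`. Hence `ε = #S - #T + D`, where `D` is
the largest excess of `T` over `S` among the first rows. In the block `#S = 4`, `#T = 3` and
the runner weights add up to `3`, so all beads lie in rows `< 7`; thus `ε ≥ 2` iff `D > 0`, and a
finite check shows that this happens exactly when runner `a - 1` is bare and runner `a`
displays `(2,1)`, `(1,1)` or `(1,1,1)`. The remaining weight, `0` or a single `(1)` on one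
other runner, then determines the display.
-/

open Finset

section Runners

variable {e : ℕ} {B : Finset ℕ}

def runnerRows (e : ℕ) (B : Finset ℕ) (i : ℕ) : Finset ℕ :=
  (B.filter (· % e = i)).image (· / e)

lemma add_mul_mod_of_lt {i : ℕ} (m : ℕ) (hi : i < e) : (i + m * e) % e = i := by
  rw [Nat.add_mul_mod_self_right, Nat.mod_eq_of_lt hi]

lemma add_mul_div_of_lt {i : ℕ} (m : ℕ) (hi : i < e) : (i + m * e) / e = m := by
  rw [Nat.add_mul_div_right _ _ (by omega), Nat.div_eq_of_lt hi, Nat.zero_add]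

lemma mod_add_div_mul_of_mod_eq {i p : ℕ} (hp : p % e = i) : i + p / e * e = p := by
  rw [← hp, mul_comm, Nat.mod_add_div]

lemma mem_runnerRows {i m : ℕ} (hi : i < e) : m ∈ runnerRows e B i ↔ i + m * e ∈ B := by
  simp only [runnerRows, mem_image, mem_filter]
  constructor
  · rintro ⟨p, ⟨hpB, hpi⟩, rfl⟩
    rwa [mod_add_div_mul_of_mod_eq hpi]
  · exact fun h => ⟨i + m * e, ⟨h, add_mul_mod_of_lt m hi⟩, add_mul_div_of_lt m hi⟩

lemma div_injOn_runner (i : ℕ) : Set.InjOn (· / e) (B.filter (· % e = i) : Set ℕ) := by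
  intro p hp q hq hpq
  rw [← mod_add_div_mul_of_mod_eq (mem_filter.mp hp).2,
    ← mod_add_div_mul_of_mod_eq (mem_filter.mp hq).2,
    show p / e = q / e from hpq]

lemma runnerCount_eq_card_runnerRows (i : ℕ) : runnerCount e B i = #(runnerRows e B i) :=
  (card_image_of_injOn (div_injOn_runner i)).symm

lemma beadWeight_one (M : Finset ℕ) (m : ℕ) :
    beadWeight 1 M m = #((range m).filter (· ∉ M)) := by
  simp only [beadWeight, Nat.mod_one, true_and]

lemma beadWeight_add_mul {i : ℕ} (hi : i < e) (m : ℕ) :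
    beadWeight e B (i + m * e) = beadWeight 1 (runnerRows e B i) m := by
  have hemb : (range (i + m * e)).filter (fun q => q % e = (i + m * e) % e ∧ q ∉ B)
      = ((range m).filter (· ∉ runnerRows e B i)).image (fun k => i + k * e) := by
    ext q
    simp only [mem_filter, mem_image, mem_range, add_mul_mod_of_lt m hi, mem_runnerRows hi]
    constructor
    · rintro ⟨hq, hqi, hqB⟩
      have hq' := mod_add_div_mul_of_mod_eq hqi
      refine ⟨q / e, ⟨?_, by rwa [hq']⟩, hq'⟩
      by_contra! h
      nlinarith [Nat.mul_le_mul_right e h]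
    · rintro ⟨k, ⟨hk, hkB⟩, rfl⟩
      exact ⟨by nlinarith [Nat.mul_lt_mul_of_pos_right hk (show 0 < e by omega)],
        add_mul_mod_of_lt k hi, hkB⟩
  rw [beadWeight, hemb, card_image_of_injective _ fun x y h => ?_, beadWeight_one]
  exact Nat.eq_of_mul_eq_mul_right (by omega) (Nat.add_left_cancel h)

lemma runnerWeight_eq_abacusWeight_one {i : ℕ} (hi : i < e) :
    runnerWeight e B i = abacusWeight 1 (runnerRows e B i) := by
  rw [abacusWeight, runnerRows, sum_image (div_injOn_runner i), runnerWeight]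
  refine sum_congr rfl fun p hp => ?_
  rw [← runnerRows, ← beadWeight_add_mul hi, mod_add_div_mul_of_mod_eq (mem_filter.mp hp).2]

lemma abacusWeight_eq_sum_abacusWeight_runnerRows (he : 0 < e) :
    abacusWeight e B = ∑ i ∈ range e, abacusWeight 1 (runnerRows e B i) := by
  rw [abacusWeight, ← sum_fiberwise_of_maps_to (g := (· % e))
    (fun p _ => mem_range.mpr (Nat.mod_lt p he))]
  exact sum_congr rfl fun i hi => runnerWeight_eq_abacusWeight_one (mem_range.mp hi)

lemma mem_display {bd : ℕ → ℕ} {lamOf : ℕ → List ℕ} {p : ℕ} (he : 0 < e) :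
    p ∈ display e bd lamOf ↔ p / e ∈ oneRunnerBeta (lamOf (p % e)) (bd (p % e)) := by
  simp only [display, mem_biUnion, mem_image, mem_range]
  constructor
  · rintro ⟨i, hi, m, hm, rfl⟩
    rwa [add_mul_mod_of_lt m hi, add_mul_div_of_lt m hi]
  · exact fun h => ⟨p % e, Nat.mod_lt p he, p / e, h, mod_add_div_mul_of_mod_eq rfl⟩

lemma runnerRows_display {bd : ℕ → ℕ} {lamOf : ℕ → List ℕ} {i : ℕ} (hi : i < e) :
    runnerRows e (display e bd lamOf) i = oneRunnerBeta (lamOf i) (bd i) := by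
  ext m
  rw [mem_runnerRows hi, mem_display (by omega), add_mul_mod_of_lt m hi, add_mul_div_of_lt m hi]

lemma eq_display_iff {bd : ℕ → ℕ} {lamOf : ℕ → List ℕ} (he : 0 < e) :
    B = display e bd lamOf ↔ ∀ i < e, runnerRows e B i = oneRunnerBeta (lamOf i) (bd i) := by
  refine ⟨fun h i hi => h ▸ runnerRows_display hi, fun h => ?_⟩
  ext p
  rw [mem_display he, ← h (p % e) (Nat.mod_lt p he), mem_runnerRows (Nat.mod_lt p he),
    mod_add_div_mul_of_mod_eq rfl]

end Runners

lemma beadWeight_one_add_card_inter (M : Finset ℕ) (x : ℕ) :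
    beadWeight 1 M x + #(range x ∩ M) = x := by
  rw [beadWeight_one, ← filter_mem_eq_inter, add_comm, card_filter_add_card_filter_not,
    card_range]

lemma subset_range_abacusWeight_one_add_card (M : Finset ℕ) :
    M ⊆ range (abacusWeight 1 M + #M) := fun x hx => by
  have hbead : beadWeight 1 M x ≤ abacusWeight 1 M :=
    single_le_sum (f := beadWeight 1 M) (fun _ _ => Nat.zero_le _) hx
  have hbelow : #(range x ∩ M) < #M :=
    card_lt_card ⟨inter_subset_right, fun h => by simpa using (h hx)⟩
  have := beadWeight_one_add_card_inter M x
  exact mem_range.mpr (by omega)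

/-- The `+` signs of the signature along runner `a` that survive cancellation: the largest
excess of beads of runner `a - 1` over beads of runner `a` in the first `m ≤ n` rows. -/
def rowDeficit (S T : Finset ℕ) (n : ℕ) : ℕ :=
  (range (n + 1)).sup fun m => #(T ∩ range m) - #(S ∩ range m)

section Deficit

variable {S T : Finset ℕ}

lemma rowDeficit_succ (n : ℕ) :
    rowDeficit S T (n + 1)
      = max (#(T ∩ range (n + 1)) - #(S ∩ range (n + 1))) (rowDeficit S T n) := by
  rw [rowDeficit, range_add_one, sup_insert, rowDeficit]

lemma le_rowDeficit {m n : ℕ} (h : m ≤ n) :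
    #(T ∩ range m) - #(S ∩ range m) ≤ rowDeficit S T n :=
  le_sup (f := fun m => #(T ∩ range m) - #(S ∩ range m)) (mem_range.mpr (by omega))

lemma rowDeficit_eq_of_subset_range {k n : ℕ} (hS : S ⊆ range k) (hT : T ⊆ range k)
    (hcard : #T ≤ #S) (hkn : k ≤ n) : rowDeficit S T n = rowDeficit S T k := by
  refine le_antisymm (Finset.sup_le fun m hm => ?_) (sup_mono (range_subset_range.mpr (by omega)))
  rcases le_or_gt m k with hmk | hkm
  · exact le_rowDeficit hmk
  · have hsub : range k ⊆ range m := range_subset_range.mpr hkm.le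
    rw [inter_eq_left.mpr (hS.trans hsub), inter_eq_left.mpr (hT.trans hsub)]
    omega

end Deficit

lemma card_inter_range_succ (M : Finset ℕ) (n : ℕ) :
    #(M ∩ range (n + 1)) = #(M ∩ range n) + if n ∈ M then 1 else 0 := by
  rw [range_add_one]
  split_ifs with h
  · rw [inter_insert_of_mem h, card_insert_of_notMem (by simp)]
  · rw [inter_insert_of_notMem h, add_zero]

section Signature

variable {e : ℕ} {B : Finset ℕ}

lemma length_foldl_signStep_runner {a : ℕ} (ha : 1 ≤ a) (hae : a < e) (n : ℕ) :
    (((List.range n).map (a + · * e)).foldl (signStep B) ([], [])).2.length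
        + #(runnerRows e B (a - 1) ∩ range n)
      = rowDeficit (runnerRows e B a) (runnerRows e B (a - 1)) n
        + #(runnerRows e B a ∩ range n) := by
  set S := runnerRows e B a
  set T := runnerRows e B (a - 1)
  induction n with
  | zero => simp [rowDeficit]
  | succ n ih =>
    rw [List.range_succ, List.map_append, List.foldl_append, List.map_singleton,
      List.foldl_cons, List.foldl_nil, rowDeficit_succ, card_inter_range_succ S,
      card_inter_range_succ T]
    generalize ((List.range n).map (a + · * e)).foldl (signStep B) ([], []) = st at ih ⊢
    obtain ⟨plus, minus⟩ := st
    have hle := le_rowDeficit (S := S) (T := T) (le_refl n)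
    have hS : a + n * e ∈ B ↔ n ∈ S := (mem_runnerRows hae).symm
    have hT : a + n * e - 1 ∈ B ↔ n ∈ T := by
      rw [mem_runnerRows (by omega), show a - 1 + n * e = a + n * e - 1 by omega]
    -- a `-` is pushed; a `+` cancels the latest pending `-`, or survives and raises `rowDeficit`
    simp only [signStep, hS, hT, show a + n * e ≠ 0 by omega, false_or]
    by_cases hnS : n ∈ S <;> by_cases hnT : n ∈ T <;> rcases minus with _ | ⟨_, minus⟩ <;>
      simp [hnS, hnT] at ih ⊢ <;> omega

lemma signStep_eq_self {p : ℕ} (st : List ℕ × List ℕ) (hp : p ∉ B) (hp0 : p ≠ 0)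
    (hp1 : p - 1 ∉ B) : signStep B st p = st := by
  simp [signStep, hp, hp0, hp1]

lemma foldl_signStep_eq_self (l : List ℕ) (st : List ℕ × List ℕ)
    (h : ∀ p ∈ l, B.sup id + 2 ≤ p) : l.foldl (signStep B) st = st := by
  induction l with
  | nil => rfl
  | cons p l ih =>
    have hp := h p List.mem_cons_self
    have not_mem : ∀ q, B.sup id < q → q ∉ B := fun q hq hqB =>
      absurd (le_sup (f := id) hqB) (by simpa using hq)
    rw [List.foldl_cons,
      signStep_eq_self st (not_mem p (by omega)) (by omega) (not_mem _ (by omega))]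
    exact ih fun q hq => h q (List.mem_cons_of_mem p hq)

lemma filter_range_mul_mod_eq {a : ℕ} (hae : a < e) (q : ℕ) :
    (List.range (q * e)).filter (· % e == a) = (List.range q).map (a + · * e) := by
  induction q with
  | zero => simp
  | succ q ih =>
    rw [Nat.succ_mul, List.range_add, List.filter_append, ih, List.range_succ, List.map_append,
      List.filter_map]
    congr 1
    have hrow : ∀ j ∈ List.range e, (q * e + j) % e == a ↔ j = a := by
      intro j hj
      rw [Nat.add_comm, Nat.add_mul_mod_self_right, Nat.mod_eq_of_lt (List.mem_range.mp hj)]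
      simp
    rw [List.filter_congr (q := (· == a)) (by simpa using hrow), List.filter_beq,
      List.count_eq_one_of_mem List.nodup_range (List.mem_range.mpr hae)]
    simp [Nat.add_comm]

lemma signState_eq_foldl {a q : ℕ} (hae : a < e) (hq : B.sup id + e + 2 ≤ q) :
    signState e B a = ((List.range q).map (a + · * e)).foldl (signStep B) ([], []) := by
  have hqe : B.sup id + e + 2 ≤ q * e := hq.trans (Nat.le_mul_of_pos_right q (by omega))
  obtain ⟨k, hk⟩ := Nat.exists_eq_add_of_le hqe
  rw [← filter_range_mul_mod_eq hae, hk, List.range_add, List.filter_append, List.foldl_append,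
    signState, posList]
  refine (foldl_signStep_eq_self _ _ fun p hp => ?_).symm
  simp only [List.mem_filter, List.mem_map, List.mem_range] at hp
  omega

lemma epsB_add_card_runnerRows {a n : ℕ} (ha : 1 ≤ a) (hae : a < e)
    (hn : B.sup id + e + 2 ≤ n) :
    epsB e B a + #(runnerRows e B (a - 1))
      = rowDeficit (runnerRows e B a) (runnerRows e B (a - 1)) n + #(runnerRows e B a) := by
  have hrows : ∀ i < e, runnerRows e B i ∩ range n = runnerRows e B i := fun i hi =>
    inter_eq_left.mpr fun m hm => by
      have := le_sup (f := id) ((mem_runnerRows hi).mp hm)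
      simp only [id] at this
      exact mem_range.mpr (by nlinarith)
  have h := length_foldl_signStep_runner (B := B) ha hae n
  rwa [hrows a hae, hrows (a - 1) (by omega), ← signState_eq_foldl hae hn] at h

lemma two_le_epsB_iff_rowDeficit_pos {a k : ℕ} (ha : 1 ≤ a) (hae : a < e)
    (hcard : #(runnerRows e B a) = #(runnerRows e B (a - 1)) + 1)
    (hS : runnerRows e B a ⊆ range k) (hT : runnerRows e B (a - 1) ⊆ range k) :
    2 ≤ epsB e B a ↔ 0 < rowDeficit (runnerRows e B a) (runnerRows e B (a - 1)) k := by
  have h := epsB_add_card_runnerRows (B := B) ha hae (n := B.sup id + e + 2 + k) (by omega)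
  rw [rowDeficit_eq_of_subset_range hS hT (by omega) (by omega)] at h
  omega

end Signature

lemma exists_eq_one_of_sum_eq_one {ι : Type*} [DecidableEq ι] {s : Finset ι} {f : ι → ℕ}
    (h : ∑ i ∈ s, f i = 1) : ∃ i ∈ s, f i = 1 ∧ ∀ j ∈ s, j ≠ i → f j = 0 := by
  obtain ⟨i, hi, hfi⟩ := exists_ne_zero_of_sum_ne_zero (h.trans_ne one_ne_zero)
  have hle : f i ≤ 1 := h ▸ single_le_sum (fun _ _ => Nat.zero_le _) hi
  have hrest : ∑ j ∈ s.erase i, f j = 0 := by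
    have := add_sum_erase s f hi
    omega
  exact ⟨i, hi, by omega, fun j hj hji =>
    sum_eq_zero_iff.mp hrest j (mem_erase.mpr ⟨hji, hj⟩)⟩

set_option maxRecDepth 100000 in
lemma rowDeficit_pos_iff_of_mem_powerset :
    ∀ S ∈ (range 7).powerset, ∀ T ∈ (range 7).powerset, #S = 4 → #T = 3 →
      abacusWeight 1 S + abacusWeight 1 T ≤ 3 →
      (0 < rowDeficit S T 7 ↔ T = oneRunnerBeta [] 3 ∧
        (S = oneRunnerBeta [2, 1] 4 ∨ S = oneRunnerBeta [1, 1] 4 ∨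
          S = oneRunnerBeta [1, 1, 1] 4)) := by
  decide

lemma rowDeficit_pos_iff {S T : Finset ℕ} (hS : #S = 4) (hT : #T = 3)
    (hw : abacusWeight 1 S + abacusWeight 1 T ≤ 3) :
    0 < rowDeficit S T 7 ↔ T = oneRunnerBeta [] 3 ∧
      (S = oneRunnerBeta [2, 1] 4 ∨ S = oneRunnerBeta [1, 1] 4 ∨
        S = oneRunnerBeta [1, 1, 1] 4) :=
  rowDeficit_pos_iff_of_mem_powerset S
    (mem_powerset.mpr ((subset_range_abacusWeight_one_add_card S).trans
      (range_subset_range.mpr (by omega))))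
    T (mem_powerset.mpr ((subset_range_abacusWeight_one_add_card T).trans
      (range_subset_range.mpr (by omega)))) hS hT hw

set_option maxRecDepth 100000 in
lemma eq_oneRunnerBeta_of_mem_powerset :
    ∀ M ∈ (range 5).powerset, (#M = 3 ∨ #M = 4) → abacusWeight 1 M ≤ 1 →
      M = oneRunnerBeta (List.replicate (abacusWeight 1 M) 1) #M := by
  decide

lemma eq_oneRunnerBeta_replicate {M : Finset ℕ} (hM : #M = 3 ∨ #M = 4)
    (hw : abacusWeight 1 M ≤ 1) : M = oneRunnerBeta (List.replicate (abacusWeight 1 M) 1) #M :=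
  eq_oneRunnerBeta_of_mem_powerset M
    (mem_powerset.mpr ((subset_range_abacusWeight_one_add_card M).trans
      (range_subset_range.mpr (by omega)))) hM hw

section RunnerFamily

variable {e a : ℕ} {R : ℕ → Finset ℕ}

lemma sum_erase_abacusWeight_one (hae : a < e)
    (hsum : ∑ i ∈ range e, abacusWeight 1 (R i) = 3) :
    ∑ i ∈ (range e).erase a, abacusWeight 1 (R i) = 3 - abacusWeight 1 (R a) := by
  have := add_sum_erase (range e) (fun i => abacusWeight 1 (R i)) (mem_range.mpr hae)
  omega

lemma eq_core_of_abacusWeight_eq_three (hcard : ∀ i < e, #(R i) = 3 ∨ #(R i) = 4)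
    (hsum : ∑ i ∈ range e, abacusWeight 1 (R i) = 3) (hae : a < e)
    (ha3 : abacusWeight 1 (R a) = 3) {i : ℕ} (hi : i < e) (hia : i ≠ a) :
    R i = oneRunnerBeta [] #(R i) := by
  have h0 : abacusWeight 1 (R i) = 0 := by
    have hrest := sum_erase_abacusWeight_one hae hsum
    rw [ha3, Nat.sub_self, sum_eq_zero_iff] at hrest
    exact hrest i (mem_erase.mpr ⟨hia, mem_range.mpr hi⟩)
  simpa [h0] using eq_oneRunnerBeta_replicate (hcard i hi) (by omega)

lemma exists_runner_of_abacusWeight_eq_two (hcard : ∀ i < e, #(R i) = 3 ∨ #(R i) = 4)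
    (hsum : ∑ i ∈ range e, abacusWeight 1 (R i) = 3) (hae : a < e)
    (ha2 : abacusWeight 1 (R a) = 2) :
    ∃ i₀ < e, i₀ ≠ a ∧ abacusWeight 1 (R i₀) = 1 ∧
      ∀ i < e, i ≠ a → R i = oneRunnerBeta (if i = i₀ then [1] else []) #(R i) := by
  have hrest := sum_erase_abacusWeight_one hae hsum
  rw [ha2] at hrest
  obtain ⟨i₀, hi₀, hw₁, hw₀⟩ := exists_eq_one_of_sum_eq_one hrest
  obtain ⟨hi₀a, hi₀e⟩ : i₀ ≠ a ∧ i₀ < e := by simpa using hi₀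
  refine ⟨i₀, hi₀e, hi₀a, hw₁, fun i hi hia => ?_⟩
  by_cases hii : i = i₀
  · subst hii
    simpa [hw₁] using eq_oneRunnerBeta_replicate (hcard i hi) hw₁.le
  · have h0 := hw₀ i (mem_erase.mpr ⟨hia, mem_range.mpr hi⟩) hii
    simpa [hii, h0] using eq_oneRunnerBeta_replicate (hcard i hi) (by omega)

end RunnerFamily

lemma exceptional_runners_iff {e a : ℕ} {bd : ℕ → ℕ} {R : ℕ → Finset ℕ}
    (ha : 0 < a) (hae : a < e)
    (hbd : ∀ i, bd i = 3 ∨ bd i = 4) (hbda : bd a = 4) (hbda1 : bd (a - 1) = 3)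
    (hcard : ∀ i < e, #(R i) = bd i) (hsum : ∑ i ∈ range e, abacusWeight 1 (R i) = 3) :
    R (a - 1) = oneRunnerBeta [] 3 ∧
        (R a = oneRunnerBeta [2, 1] 4 ∨ R a = oneRunnerBeta [1, 1] 4 ∨
          R a = oneRunnerBeta [1, 1, 1] 4) ↔
      (∀ i < e, R i = oneRunnerBeta (if i = a then [2, 1] else []) (bd i)) ∨
      (∃ i₀, a < i₀ ∧ i₀ < e ∧ ∀ i < e,
        R i = oneRunnerBeta (if i = a then [1, 1] else if i = i₀ then [1] else []) (bd i)) ∨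
      (∃ i₀, i₀ + 2 ≤ a ∧ ∀ i < e,
        R i = oneRunnerBeta (if i = a then [1, 1] else if i = i₀ then [1] else []) (bd i)) ∨
      (∀ i < e, R i = oneRunnerBeta (if i = a then [1, 1, 1] else []) (bd i)) := by
  have hcard' : ∀ i < e, #(R i) = 3 ∨ #(R i) = 4 := fun i hi => hcard i hi ▸ hbd i
  have hbare : ∀ ρ, R a = oneRunnerBeta ρ 4 → abacusWeight 1 (R a) = 3 →
      ∀ i < e, R i = oneRunnerBeta (if i = a then ρ else []) (bd i) := by
    intro ρ hS ha3 i hi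
    by_cases hia : i = a
    · simpa [hia, hbda] using hS
    · rw [if_neg hia, ← hcard i hi]
      exact eq_core_of_abacusWeight_eq_three hcard' hsum hae ha3 hi hia
  constructor
  · rintro ⟨hT, hS | hS | hS⟩
    · exact Or.inl (hbare _ hS (by rw [hS]; decide))
    · obtain ⟨i₀, hi₀e, hi₀a, hw₁, hrows⟩ :=
        exists_runner_of_abacusWeight_eq_two hcard' hsum hae (by rw [hS]; decide)
      have hi₀a1 : i₀ ≠ a - 1 := by
        rintro rfl
        rw [hT] at hw₁
        exact absurd hw₁ (by decide)
      have hrows' : ∀ i < e,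
          R i = oneRunnerBeta (if i = a then [1, 1] else if i = i₀ then [1] else []) (bd i) := by
        intro i hi
        by_cases hia : i = a
        · simpa [hia, hbda] using hS
        · rw [if_neg hia, ← hcard i hi]
          exact hrows i hi hia
      rcases Nat.lt_or_gt_of_ne hi₀a with h | h
      · exact Or.inr (Or.inr (Or.inl ⟨i₀, by omega, hrows'⟩))
      · exact Or.inr (Or.inl ⟨i₀, h, hi₀e, hrows'⟩)
    · exact Or.inr (Or.inr (Or.inr (hbare _ hS (by rw [hS]; decide))))
  · rintro (h | ⟨i₀, hi₀, -, h⟩ | ⟨i₀, hi₀, h⟩ | h) <;>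
      have hT := h (a - 1) (by omega) <;> have hS := h a hae <;>
      simp [hbda, hbda1, show a - 1 ≠ a by omega] at hT hS
    · exact ⟨hT, Or.inl hS⟩
    · exact ⟨by simpa [show a - 1 ≠ i₀ by omega] using hT, Or.inr (Or.inl hS)⟩
    · exact ⟨by simpa [show a - 1 ≠ i₀ by omega] using hT, Or.inr (Or.inl hS)⟩
    · exact ⟨hT, Or.inr (Or.inr hS)⟩

theorem stmt7_general (e a b : ℕ) (ha : 0 < a) (hab : a < b) (hbe : b ≤ e)
    (bd : ℕ → ℕ) (hbd : bd = fun i => if i < a then 3 else if i < b then 4 else 3)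
    (r : ℕ) (hr : r = (Finset.range e).sum bd)
    (lam : AbacusPartition) (hlam : inBlock e bd 3 lam)
    (B : Finset ℕ) (hB : B = lam.betaSet r) :
    2 ≤ epsB e B a ↔
      (B = display e bd (fun m => if m = a then [2, 1] else []) ∨
       (∃ i, a < i ∧ i < e ∧
         B = display e bd (fun m => if m = a then [1, 1] else if m = i then [1] else [])) ∨
       (∃ i, i + 2 ≤ a ∧
         B = display e bd (fun m => if m = a then [1, 1] else if m = i then [1] else [])) ∨
       B = display e bd (fun m => if m = a then [1, 1, 1] else [])) := by
  have hae : a < e := hab.trans_le hbe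
  have hbd34 : ∀ i, bd i = 3 ∨ bd i = 4 := fun i => by simp only [hbd]; split_ifs <;> simp
  have hbda : bd a = 4 := by simp [hbd, hab]
  have hbda1 : bd (a - 1) = 3 := by simp [hbd, show a - 1 < a by omega]
  obtain ⟨-, hcount, hweight⟩ := hlam
  rw [← hr, ← hB] at hcount hweight
  have hcard : ∀ i < e, #(runnerRows e B i) = bd i := fun i hi =>
    (runnerCount_eq_card_runnerRows i).symm.trans (hcount i hi)
  have hsum : ∑ i ∈ range e, abacusWeight 1 (runnerRows e B i) = 3 :=
    (abacusWeight_eq_sum_abacusWeight_runnerRows (by omega)).symm.trans hweight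
  have hS4 : #(runnerRows e B a) = 4 := by rw [hcard a hae, hbda]
  have hT3 : #(runnerRows e B (a - 1)) = 3 := by rw [hcard (a - 1) (by omega), hbda1]
  have hpair :
      abacusWeight 1 (runnerRows e B a) + abacusWeight 1 (runnerRows e B (a - 1)) ≤ 3 := by
    have := hsum ▸ sum_le_sum_of_subset (f := fun i => abacusWeight 1 (runnerRows e B i))
      (show {a, a - 1} ⊆ range e by
        intro x; simp only [mem_insert, mem_singleton, mem_range]; omega)
    rwa [sum_pair (by omega)] at this
  rw [two_le_epsB_iff_rowDeficit_pos (k := 7) ha hae (by omega)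
      ((subset_range_abacusWeight_one_add_card _).trans (range_subset_range.mpr (by omega)))
      ((subset_range_abacusWeight_one_add_card _).trans (range_subset_range.mpr (by omega))),
    rowDeficit_pos_iff hS4 hT3 hpair]
  simp only [eq_display_iff (show 0 < e by omega)]
  exact exceptional_runners_iff ha hae hbd34 hbda hbda1 hcard hsum

/-- exceptional partitions for the `[3:1]`-pair formed by the block
`⟨3^a, 4^{b−a}, 3^{e−b}⟩` via the residue carried by runner `a`. -/
theorem stmt7 (e a b : ℕ) (he : 2 ≤ e) (ha : 0 < a) (hab : a < b) (hbe : b ≤ e)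
    (bd : ℕ → ℕ) (hbd : bd = fun i => if i < a then 3 else if i < b then 4 else 3)
    (r : ℕ) (hr : r = (Finset.range e).sum bd)
    (lam : AbacusPartition) (hlam : inBlock e bd 3 lam)
    (B : Finset ℕ) (hB : B = lam.betaSet r) :
    2 ≤ epsB e B a ↔
      (B = display e bd (fun m => if m = a then [2, 1] else []) ∨
       (∃ i, a < i ∧ i < e ∧
         B = display e bd (fun m => if m = a then [1, 1] else if m = i then [1] else [])) ∨
       (∃ i, i + 2 ≤ a ∧
         B = display e bd (fun m => if m = a then [1, 1] else if m = i then [1] else [])) ∨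
       B = display e bd (fun m => if m = a then [1, 1, 1] else [])) :=
  stmt7_general e a b ha hab hbe bd hbd r hr lam hlam B hB
end
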